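/- arXiv:1504.06440 — 4 statements merged into one kernel-verified Lean document; each statement's English description precedes it below -/
import Mathlib

section
/- Let H_E be a linear subspace of ℂ^{N₁} ⊗ ℂ^{N₂} of dimension d. If d > N₁N₂ − N₁ − N₂ + 1, then H_E contains a nonzero product vector u ⊗ v. -/
/-!
Let `ℓ₁, …, ℓᵣ` be linear forms cutting out `H`, so `r = N₁N₂ - dim H ≤ N₁ + N₂ - 2`, and let `gₖ`
be the bilinear polynomial with `gₖ(u, v) = ℓₖ(u ⊗ v)`. If the `gₖ` had no common zero with
`u ≠ 0` and `v ≠ 0`, the Nullstellensatz would put a power of the ideal `(xᵢ yⱼ)` inside the ideal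
`(g₁, …, gᵣ)`, so every polynomial of bidegree `(d, d)` with `d > N` would be a combination of the
`gₖ` with coefficients of bidegree `(d - 1, d - 1)`. Iterating, the space of polynomials of
bidegree `(d, d)` is spanned by the spaces of bidegree `(e, e)`, `e ≤ N`, times products of
`d - e` of the `gₖ`, so its dimension is `O(d ^ (r - 1))`. But that dimension is
`multichoose N₁ d * multichoose N₂ d`, of order `d ^ (N₁ + N₂ - 2)`, and `r - 1 < N₁ + N₂ - 2`.
-/

open Module Submodule MvPolynomial
open scoped Nat

section Graded

variable {ι R A : Type*} [DecidableEq ι] [AddRightCancelMonoid ι] [CommSemiring R] [CommSemiring A]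
  [Algebra R A] (𝒜 : ι → Submodule R A) [GradedAlgebra 𝒜]

theorem mem_mul_span_of_mem_ideal_span {κ : Type*} [Fintype κ] {g : κ → A} {i j : ι}
    (hg : ∀ k, g k ∈ 𝒜 j) {f : A} (hf : f ∈ 𝒜 (i + j)) (hfg : f ∈ Ideal.span (Set.range g)) :
    f ∈ 𝒜 i * span R (Set.range g) := by
  obtain ⟨c, rfl⟩ := Ideal.mem_span_range_iff_exists_fun.mp hfg
  rw [← DirectSum.decompose_of_mem_same 𝒜 hf, ← GradedRing.proj_apply, map_sum]
  refine sum_mem fun k _ => ?_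
  rw [GradedRing.proj_apply, DirectSum.coe_decompose_mul_add_of_right_mem 𝒜 (hg k)]
  exact mul_mem_mul (SetLike.coe_mem _) (subset_span ⟨k, rfl⟩)

theorem le_sum_mul_span_pow {κ : Type*} [Fintype κ] {g : κ → A} {δ : ι} (hg : ∀ k, g k ∈ 𝒜 δ)
    {D : ℕ} (hD : ∀ d, D < d → ∀ f ∈ 𝒜 (d • δ), f ∈ Ideal.span (Set.range g)) (d : ℕ) :
    𝒜 (d • δ) ≤ ∑ e ∈ Finset.range (D + 1), 𝒜 (e • δ) * span R (Set.range g) ^ (d - e) := by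
  have hsmall (d : ℕ) (hd : d ≤ D) :
      𝒜 (d • δ) ≤ ∑ e ∈ Finset.range (D + 1), 𝒜 (e • δ) * span R (Set.range g) ^ (d - e) :=
    le_trans (by simp) (Finset.single_le_sum (f := fun e => 𝒜 (e • δ) * _ ^ (d - e))
      (fun _ _ => bot_le) (Finset.mem_range.2 (Nat.lt_succ_of_le hd)))
  induction d with
  | zero => exact hsmall 0 (Nat.zero_le D)
  | succ d ih =>
    rcases le_or_gt (d + 1) D with hdD | hDd
    · exact hsmall (d + 1) hdD
    intro f hf
    have hfI := hD (d + 1) hDd f hf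
    rw [succ_nsmul] at hf
    have hmem := mul_le_mul_left ih _ (mem_mul_span_of_mem_ideal_span 𝒜 hg hf hfI)
    rw [Finset.sum_mul] at hmem
    convert hmem using 1
    refine Finset.sum_congr rfl fun e he => ?_
    have := Finset.mem_range.1 he
    rw [mul_assoc, ← pow_succ, show d - e + 1 = d + 1 - e by omega]

end Graded

section Dimension

variable {K A : Type*} [Field K] [CommRing A] [Algebra K A]

instance Submodule.finiteDimensional_mul (M N : Submodule K A) [FiniteDimensional K M]
    [FiniteDimensional K N] : FiniteDimensional K ↥(M * N) := by
  rw [← Submodule.mulMap_range]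
  infer_instance

instance Submodule.finiteDimensional_pow (M : Submodule K A) [FiniteDimensional K M] (n : ℕ) :
    FiniteDimensional K ↥(M ^ n) :=
  Module.Finite.iff_fg.mpr <| (Module.Finite.iff_fg.mp inferInstance).pow n

theorem Submodule.finrank_mul_le (M N : Submodule K A) [FiniteDimensional K M]
    [FiniteDimensional K N] :
    finrank K ↥(M * N) ≤ finrank K M * finrank K N := by
  rw [← Submodule.mulMap_range, ← Module.finrank_tensorProduct]
  exact LinearMap.finrank_range_le _

instance Submodule.finiteDimensional_sum {ι : Type*} (s : Finset ι) (M : ι → Submodule K A)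
    [∀ i, FiniteDimensional K (M i)] : FiniteDimensional K ↥(∑ i ∈ s, M i) := by
  classical
  induction s using Finset.induction_on with
  | empty => rw [Finset.sum_empty, zero_eq_bot]; exact finiteDimensional_bot K A
  | insert i s hi ih => rw [Finset.sum_insert hi, add_eq_sup]; infer_instance

theorem Submodule.finrank_sum_le {ι : Type*} (s : Finset ι) (M : ι → Submodule K A)
    [∀ i, FiniteDimensional K (M i)] : finrank K ↥(∑ i ∈ s, M i) ≤ ∑ i ∈ s, finrank K (M i) := by
  classical
  induction s using Finset.induction_on with
  | empty => rw [Finset.sum_empty, zero_eq_bot, finrank_bot]; exact zero_le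
  | insert i s hi ih =>
    rw [Finset.sum_insert hi, Finset.sum_insert hi, add_eq_sup]
    exact (finrank_add_le_finrank_add_finrank _ _).trans (by gcongr)

theorem span_range_pow_le_span_range_prod {κ : Type*} (g : κ → A) (n : ℕ) :
    span K (Set.range g) ^ n ≤
      span K (Set.range fun s : Sym κ n => ((s : Multiset κ).map g).prod) := by
  induction n with
  | zero =>
    rw [pow_zero, one_eq_span, span_le, Set.singleton_subset_iff]
    exact subset_span ⟨Sym.nil, by simp⟩
  | succ n ih =>
    rw [pow_succ]
    refine (mul_le_mul_left ih _).trans ?_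
    rw [span_mul_span]
    refine span_mono ?_
    rintro _ ⟨_, ⟨s, rfl⟩, _, ⟨k, rfl⟩, rfl⟩
    exact ⟨k ::ₛ s, by simp only [Sym.coe_cons, Multiset.map_cons, Multiset.prod_cons, mul_comm]⟩

theorem finrank_span_range_pow_le {κ : Type*} [Fintype κ] [DecidableEq κ] (g : κ → A) (n : ℕ) :
    finrank K ↥(span K (Set.range g) ^ n) ≤ (Fintype.card κ).multichoose n := by
  rw [← Sym.card_sym_eq_multichoose]
  have := FiniteDimensional.span_of_finite K
    (Set.finite_range fun s : Sym κ n => ((s : Multiset κ).map g).prod)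
  exact (finrank_mono (span_range_pow_le_span_range_prod g n)).trans (finrank_range_le_card _)

end Dimension

section Bigraded

variable {K : Type*} [Field K] {ι κ : Type*}

variable (ι κ) in
def biWeight : ι ⊕ κ → ℕ × ℕ := Sum.elim (fun _ => (1, 0)) (fun _ => (0, 1))

variable (K ι κ) in
noncomputable def biIrrelevantIdeal : Ideal (MvPolynomial (ι ⊕ κ) K) :=
  Ideal.span (Set.range fun ij : ι × κ => X (Sum.inl ij.1) * X (Sum.inr ij.2))

variable [Fintype ι] [Fintype κ]

theorem weight_biWeight (m : ι ⊕ κ →₀ ℕ) :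
    Finsupp.weight (biWeight ι κ) m = (∑ i, m (Sum.inl i), ∑ j, m (Sum.inr j)) := by
  simp [Finsupp.weight_eq_sum, Fintype.sum_sum_type, biWeight, Prod.ext_iff, Prod.fst_sum,
    Prod.snd_sum]

instance finiteDimensional_weightedHomogeneousSubmodule_biWeight (a : ℕ × ℕ) :
    FiniteDimensional K (weightedHomogeneousSubmodule K (biWeight ι κ) a) := by
  let T := weightedHomogeneousSubmodule K (fun _ : ι ⊕ κ => 1) (a.1 + a.2)
  have : FiniteDimensional K T := Module.Finite.iff_fg.mpr <|
    weightedHomogeneousSubmodule_fg K _ (fun _ => one_ne_zero) _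
  refine Submodule.finiteDimensional_of_le (S₂ := T) fun f hf m hm => ?_
  have hw := hf hm
  rw [weight_biWeight] at hw
  simp [Finsupp.weight_eq_sum, Fintype.sum_sum_type, ← hw]

theorem multichoose_mul_multichoose_le_finrank (a b : ℕ) :
    (Fintype.card ι).multichoose a * (Fintype.card κ).multichoose b ≤
      finrank K (weightedHomogeneousSubmodule K (biWeight ι κ) (a, b)) := by
  classical
  let F : Finset.univ.finsuppAntidiag a × Finset.univ.finsuppAntidiag b →
      MvPolynomial (ι ⊕ κ) K := fun x => monomial (x.1.1.sumElim x.2.1) 1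
  have hF : LinearIndependent K F := by
    refine (basisMonomials (ι ⊕ κ) K).linearIndependent.comp _ fun x y hxy => ?_
    have h := DFunLike.congr_fun hxy
    exact Prod.ext (Subtype.ext (Finsupp.ext fun i => h (Sum.inl i)))
      (Subtype.ext (Finsupp.ext fun j => h (Sum.inr j)))
  have hspan : span K (Set.range F) ≤ weightedHomogeneousSubmodule K (biWeight ι κ) (a, b) := by
    rw [span_le]
    rintro _ ⟨⟨⟨x, hx⟩, ⟨y, hy⟩⟩, rfl⟩
    refine isWeightedHomogeneous_monomial _ _ _ ?_
    rw [Finset.mem_finsuppAntidiag] at hx hy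
    simp [weight_biWeight, ← hx.1, ← hy.1]
  calc _ = Fintype.card (Finset.univ.finsuppAntidiag a × Finset.univ.finsuppAntidiag b) := by
        simp [Finset.card_finsuppAntidiag_nat_eq_multichoose]
    _ = finrank K (span K (Set.range F)) := (finrank_span_eq_card hF).symm
    _ ≤ _ := finrank_mono hspan

theorem monomial_mem_biIrrelevantIdeal_pow {d : ℕ} {m : ι ⊕ κ →₀ ℕ}
    (hm : Finsupp.weight (biWeight ι κ) m = (d, d)) (c : K) :
    monomial m c ∈ biIrrelevantIdeal K ι κ ^ d := by
  induction d generalizing m with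
  | zero => simp
  | succ d ih =>
    have hs := hm
    rw [weight_biWeight, Prod.mk.injEq] at hs
    obtain ⟨i, -, hi⟩ := Finset.exists_ne_zero_of_sum_ne_zero (hs.1.trans_ne d.succ_ne_zero)
    obtain ⟨j, -, hj⟩ := Finset.exists_ne_zero_of_sum_ne_zero (hs.2.trans_ne d.succ_ne_zero)
    set m' := m - Finsupp.single (Sum.inl i) 1 - Finsupp.single (Sum.inr j) 1
    have hm' : m' + Finsupp.single (Sum.inr j) 1 + Finsupp.single (Sum.inl i) 1 = m := by
      rw [Finsupp.sub_add_single_one_cancel, Finsupp.sub_add_single_one_cancel hi]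
      simpa [Finsupp.single_apply] using hj
    have hw : Finsupp.weight (biWeight ι κ) m' = (d, d) := by
      have := congrArg (Finsupp.weight (biWeight ι κ)) hm'
      rw [map_add, map_add, Finsupp.weight_single, Finsupp.weight_single, hm] at this
      simp only [biWeight, Sum.elim_inl, Sum.elim_inr, one_smul, Prod.ext_iff, Prod.fst_add,
        Prod.snd_add] at this ⊢
      omega
    have hmul : monomial m c = (X (Sum.inl i) * X (Sum.inr j)) * monomial m' c := by
      conv_lhs => rw [← hm']
      rw [X, X, monomial_mul, monomial_mul, one_mul, one_mul]
      congr 1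
      ac_rfl
    rw [hmul, pow_succ']
    exact Ideal.mul_mem_mul (Ideal.subset_span ⟨(i, j), rfl⟩) (ih hw)

theorem MvPolynomial.IsWeightedHomogeneous.mem_biIrrelevantIdeal_pow {d : ℕ}
    {f : MvPolynomial (ι ⊕ κ) K} (hf : f.IsWeightedHomogeneous (biWeight ι κ) (d, d)) :
    f ∈ biIrrelevantIdeal K ι κ ^ d := by
  induction hf using IsWeightedHomogeneous.induction_on with
  | zero => exact zero_mem _
  | add _ _ _ _ hp hq => exact add_mem hp hq
  | monomial m c hm => exact monomial_mem_biIrrelevantIdeal_pow hm c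

theorem exists_biIrrelevantIdeal_pow_le [IsAlgClosed K] {ρ : Type*}
    (g : ρ → MvPolynomial (ι ⊕ κ) K)
    (hg : ∀ u v, u ≠ 0 → v ≠ 0 → ∃ k, eval (Sum.elim u v) (g k) ≠ 0) :
    ∃ N, biIrrelevantIdeal K ι κ ^ N ≤ Ideal.span (Set.range g) := by
  refine Ideal.exists_pow_le_of_le_radical_of_fg ?_ (Submodule.fg_span (Set.finite_range _))
  rw [← vanishingIdeal_zeroLocus_eq_radical (K := K), biIrrelevantIdeal, Ideal.span_le]
  rintro _ ⟨⟨i, j⟩, rfl⟩ x hx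
  suffices x (Sum.inl i) * x (Sum.inr j) = 0 by simpa using this
  by_contra hne
  obtain ⟨k, hk⟩ := hg (x ∘ Sum.inl) (x ∘ Sum.inr)
    (fun hu => left_ne_zero_of_mul hne (congrFun hu i))
    (fun hv => right_ne_zero_of_mul hne (congrFun hv j))
  rw [Sum.elim_comp_inl_inr] at hk
  exact hk (by simpa using hx (g k) (Ideal.subset_span ⟨k, rfl⟩))

end Bigraded

theorem Nat.succ_pow_le_factorial_mul_multichoose (n d : ℕ) :
    (d + 1) ^ n ≤ n ! * (n + 1).multichoose d := by
  rw [multichoose_eq, show n + 1 + d - 1 = n + d by omega, ← choose_symm_add, add_comm n d,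
    ← ascFactorial_eq_factorial_mul_choose]
  exact pow_succ_le_ascFactorial _ _

theorem Nat.multichoose_le_pow (n d : ℕ) : (n + 1).multichoose d ≤ (d + n) ^ n := by
  rw [multichoose_eq, show n + 1 + d - 1 = n + d by omega, ← choose_symm_add, add_comm n d]
  exact choose_le_pow _ _

theorem Nat.multichoose_le_multichoose_right {r m n : ℕ} (hr : 0 < r) (h : m ≤ n) :
    r.multichoose m ≤ r.multichoose n := by
  obtain ⟨r, rfl⟩ := Nat.exists_eq_add_one.mpr hr
  rw [multichoose_eq, multichoose_eq, show r + 1 + m - 1 = r + m by omega,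
    show r + 1 + n - 1 = r + n by omega, ← choose_symm_add, ← choose_symm_add]
  exact choose_le_choose _ (by omega)

theorem exists_lt_multichoose_mul_multichoose {p q r : ℕ} (hp : 0 < p) (hq : 0 < q) (hr : 0 < r)
    (hpqr : r + 2 ≤ p + q) (C : ℕ) :
    ∃ d, C * r.multichoose d < p.multichoose d * q.multichoose d := by
  obtain ⟨p, rfl⟩ := Nat.exists_eq_add_one.mpr hp
  obtain ⟨q, rfl⟩ := Nat.exists_eq_add_one.mpr hq
  obtain ⟨r, rfl⟩ := Nat.exists_eq_add_one.mpr hr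
  set d := p ! * q ! * C * (r + 1) ^ r
  refine ⟨d, ?_⟩
  by_contra! hle
  have key : (d + 1) * (d + 1) ^ r ≤ d * (d + 1) ^ r :=
    calc (d + 1) * (d + 1) ^ r = (d + 1) ^ (r + 1) := by ring
      _ ≤ (d + 1) ^ p * (d + 1) ^ q := by
        rw [← pow_add]; exact Nat.pow_le_pow_right d.succ_pos (by omega)
      _ ≤ (p ! * (p + 1).multichoose d) * (q ! * (q + 1).multichoose d) := by
        gcongr <;> exact Nat.succ_pow_le_factorial_mul_multichoose _ _
      _ = p ! * q ! * ((p + 1).multichoose d * (q + 1).multichoose d) := by ring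
      _ ≤ p ! * q ! * (C * (d + r) ^ r) :=
        Nat.mul_le_mul_left _ (hle.trans (Nat.mul_le_mul_left _ (Nat.multichoose_le_pow _ _)))
      _ ≤ p ! * q ! * (C * ((r + 1) * (d + 1)) ^ r) := by
        gcongr
        nlinarith
      _ = d * (d + 1) ^ r := by simp only [d, mul_pow]; ring
  have := Nat.le_of_mul_le_mul_right key (by positivity)
  omega

theorem exists_ne_zero_forall_eval_eq_zero {K : Type*} [Field K] [IsAlgClosed K]
    {ι κ ρ : Type*} [Fintype ι] [Fintype κ] [Fintype ρ] [Nonempty ι] [Nonempty κ]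
    (hcard : Fintype.card ρ + 2 ≤ Fintype.card ι + Fintype.card κ)
    (g : ρ → MvPolynomial (ι ⊕ κ) K)
    (hg : ∀ k, (g k).IsWeightedHomogeneous (biWeight ι κ) (1, 1)) :
    ∃ (u : ι → K) (v : κ → K), u ≠ 0 ∧ v ≠ 0 ∧ ∀ k, eval (Sum.elim u v) (g k) = 0 := by
  classical
  rcases isEmpty_or_nonempty ρ with hρ | hρ
  · exact ⟨1, 1, one_ne_zero, one_ne_zero, isEmptyElim⟩
  by_contra! h
  obtain ⟨N, hN⟩ := exists_biIrrelevantIdeal_pow_le g h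
  let _ := weightedGradedAlgebra K (biWeight ι κ)
  set 𝒜 := weightedHomogeneousSubmodule K (biWeight ι κ)
  have hdiag (d : ℕ) : d • ((1, 1) : ℕ × ℕ) = (d, d) := by simp
  have hcover (d : ℕ) : 𝒜 (d, d) ≤
      ∑ e ∈ Finset.range (N + 1), 𝒜 (e, e) * span K (Set.range g) ^ (d - e) := by
    simpa only [hdiag] using le_sum_mul_span_pow 𝒜 hg (D := N) (fun d hd f hf =>
      hN <| Ideal.pow_le_pow_right hd.le <|
        IsWeightedHomogeneous.mem_biIrrelevantIdeal_pow (by rwa [hdiag] at hf)) d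
  obtain ⟨d, hlt⟩ := exists_lt_multichoose_mul_multichoose Fintype.card_pos Fintype.card_pos
    Fintype.card_pos hcard (∑ e ∈ Finset.range (N + 1), finrank K (𝒜 (e, e)))
  refine hlt.not_ge ?_
  have := FiniteDimensional.span_of_finite K (Set.finite_range g)
  calc _ ≤ finrank K (𝒜 (d, d)) := multichoose_mul_multichoose_le_finrank d d
    _ ≤ ∑ e ∈ Finset.range (N + 1), finrank K ↥(𝒜 (e, e) * span K (Set.range g) ^ (d - e)) :=
      (finrank_mono (hcover d)).trans (Submodule.finrank_sum_le _ _)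
    _ ≤ ∑ e ∈ Finset.range (N + 1), finrank K (𝒜 (e, e)) * (Fintype.card ρ).multichoose d := by
      refine Finset.sum_le_sum fun e _ => (Submodule.finrank_mul_le _ _).trans ?_
      refine Nat.mul_le_mul_left _ ((finrank_span_range_pow_le g _).trans ?_)
      exact Nat.multichoose_le_multichoose_right Fintype.card_pos (Nat.sub_le d e)
    _ = _ := (Finset.sum_mul ..).symm

theorem exists_ne_zero_forall_apply_mul_eq_zero {K : Type*} [Field K] [IsAlgClosed K]
    {ι κ ρ : Type*} [Fintype ι] [Fintype κ] [Fintype ρ] [Nonempty ι] [Nonempty κ]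
    (hcard : Fintype.card ρ + 2 ≤ Fintype.card ι + Fintype.card κ)
    (ℓ : ρ → Module.Dual K (ι × κ → K)) :
    ∃ (u : ι → K) (v : κ → K), u ≠ 0 ∧ v ≠ 0 ∧ ∀ k, ℓ k (fun x => u x.1 * v x.2) = 0 := by
  classical
  let g (k : ρ) : MvPolynomial (ι ⊕ κ) K :=
    ∑ x : ι × κ, C (ℓ k (Pi.single x 1)) * (X (Sum.inl x.1) * X (Sum.inr x.2))
  have hg (k : ρ) : (g k).IsWeightedHomogeneous (biWeight ι κ) (1, 1) := by
    refine IsWeightedHomogeneous.sum _ _ _ fun x _ => ?_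
    convert (isWeightedHomogeneous_C _ _).mul ((isWeightedHomogeneous_X K _ (Sum.inl x.1)).mul
      (isWeightedHomogeneous_X K _ (Sum.inr x.2))) using 1
    simp [biWeight]
  obtain ⟨u, v, hu, hv, huv⟩ := exists_ne_zero_forall_eval_eq_zero hcard g hg
  refine ⟨u, v, hu, hv, fun k => ?_⟩
  rw [← huv k, pi_eq_sum_univ' fun x : ι × κ => u x.1 * v x.2]
  simp [g, mul_comm]

theorem exists_ne_zero_mul_mem_of_finrank_quotient_add_two_le {K : Type*} [Field K] [IsAlgClosed K]
    {ι κ : Type*} [Fintype ι] [Fintype κ] [Nonempty ι] [Nonempty κ]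
    (H : Submodule K (ι × κ → K))
    (hH : finrank K ((ι × κ → K) ⧸ H) + 2 ≤ Fintype.card ι + Fintype.card κ) :
    ∃ (u : ι → K) (v : κ → K), u ≠ 0 ∧ v ≠ 0 ∧ (fun x => u x.1 * v x.2) ∈ H := by
  let b := Module.finBasis K ((ι × κ → K) ⧸ H)
  obtain ⟨u, v, hu, hv, huv⟩ := exists_ne_zero_forall_apply_mul_eq_zero
    (by rwa [Fintype.card_fin]) fun k => b.coord k ∘ₗ H.mkQ
  exact ⟨u, v, hu, hv, (Submodule.Quotient.mk_eq_zero H).mp (b.forall_coord_eq_zero_iff.mp huv)⟩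

/-- If a linear subspace H_E of ℂ^{N₁} ⊗ ℂ^{N₂} has dimension
d > N₁N₂ − N₁ − N₂ + 1, then it contains a nonzero product vector u ⊗ v. -/
theorem exists_product_vector_of_large_dim {N₁ N₂ : ℕ} (h₁ : 0 < N₁) (h₂ : 0 < N₂)
    (H : Submodule ℂ (Fin N₁ × Fin N₂ → ℂ))
    (hd : N₁ * N₂ - N₁ - N₂ + 1 < Module.finrank ℂ H) :
    ∃ (u : Fin N₁ → ℂ) (v : Fin N₂ → ℂ),
      (fun p : Fin N₁ × Fin N₂ => u p.1 * v p.2) ≠ 0 ∧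
      (fun p : Fin N₁ × Fin N₂ => u p.1 * v p.2) ∈ H := by
  have : Nonempty (Fin N₁) := ⟨⟨0, h₁⟩⟩
  have : Nonempty (Fin N₂) := ⟨⟨0, h₂⟩⟩
  have hdim := H.finrank_quotient_add_finrank
  rw [Module.finrank_pi, Fintype.card_prod, Fintype.card_fin, Fintype.card_fin] at hdim
  obtain ⟨u, v, hu, hv, huv⟩ := exists_ne_zero_mul_mem_of_finrank_quotient_add_two_le H (by
    simp only [Fintype.card_fin]
    generalize N₁ * N₂ = P at hd hdim
    omega)
  obtain ⟨i, hi⟩ := Function.ne_iff.mp hu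
  obtain ⟨j, hj⟩ := Function.ne_iff.mp hv
  exact ⟨u, v, fun h => mul_ne_zero hi hj (congrFun h (i, j)), huv⟩
end

section
/- In ℂ² ⊗ ℂ², every two-dimensional subspace contains a nonzero product vector; hence any subspace of ℂ²⊗ℂ² containing no nonzero product vector has dimension at most 1. -/
/-!
The determinant of a member `a • x + b • y` of a pencil of `2 × 2` matrices is a binary
quadratic form in `(a, b)`, so over an algebraically closed field it vanishes at some
`(a, b) ≠ 0`; a matrix with vanishing determinant is a product `u ⊗ v`. A pencil spanned by two
independent vectors of a subspace therefore contains a nonzero product vector.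
-/

open Module Polynomial

variable {K : Type*} [Field K]

theorem IsAlgClosed.exists_quadratic_form_eq_zero [IsAlgClosed K] (a b c : K) :
    ∃ x y : K, (x ≠ 0 ∨ y ≠ 0) ∧ a * x ^ 2 + b * x * y + c * y ^ 2 = 0 := by
  by_cases hc : c = 0
  · exact ⟨0, 1, Or.inr one_ne_zero, by simp [hc]⟩
  obtain ⟨y, hy⟩ := IsAlgClosed.exists_root (C c * X ^ 2 + C b * X + C a)
    (by rw [degree_quadratic hc]; decide)
  refine ⟨1, y, Or.inl one_ne_zero, ?_⟩
  simp only [IsRoot, eval_add, eval_mul, eval_C, eval_pow, eval_X] at hy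
  linear_combination hy

theorem Matrix.exists_eq_vecMulVec_of_det_eq_zero {x : Matrix (Fin 2) (Fin 2) K} (h : x.det = 0) :
    ∃ u v : Fin 2 → K, vecMulVec u v = x := by
  rw [det_fin_two, sub_eq_zero] at h
  by_cases h00 : x 0 0 = 0
  · by_cases h01 : x 0 1 = 0
    · refine ⟨![0, 1], x 1, ?_⟩
      rw [eta_fin_two (vecMulVec _ _), eta_fin_two x]
      simp [vecMulVec_apply, h00, h01]
    have h10 : x 1 0 = 0 := by simpa [h00, h01] using h.symm
    refine ⟨![1, x 1 1 / x 0 1], ![0, x 0 1], ?_⟩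
    rw [eta_fin_two (vecMulVec _ _), eta_fin_two x]
    simp [vecMulVec_apply, h00, h10, h01]
  refine ⟨![1, x 1 0 / x 0 0], x 0, ?_⟩
  rw [eta_fin_two (vecMulVec _ _), eta_fin_two x]
  simp [vecMulVec_apply, div_mul_eq_mul_div, div_eq_iff h00]
  linear_combination h.symm

theorem Matrix.exists_det_smul_add_smul_eq_zero [IsAlgClosed K] (x y : Matrix (Fin 2) (Fin 2) K) :
    ∃ a b : K, (a ≠ 0 ∨ b ≠ 0) ∧ (a • x + b • y).det = 0 := by
  obtain ⟨a, b, hab, h⟩ := IsAlgClosed.exists_quadratic_form_eq_zero x.det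
    (x 0 0 * y 1 1 + y 0 0 * x 1 1 - x 0 1 * y 1 0 - y 0 1 * x 1 0) y.det
  refine ⟨a, b, hab, ?_⟩
  simp only [det_fin_two, add_apply, smul_apply, smul_eq_mul] at h ⊢
  linear_combination h

theorem Submodule.exists_product_ne_zero_mem_of_two_le_finrank [IsAlgClosed K]
    {H : Submodule K (Fin 2 × Fin 2 → K)} (hH : 2 ≤ finrank K H) :
    ∃ u v : Fin 2 → K, (fun p : Fin 2 × Fin 2 => u p.1 * v p.2) ≠ 0 ∧
      (fun p : Fin 2 × Fin 2 => u p.1 * v p.2) ∈ H := by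
  obtain ⟨f, hf⟩ := exists_linearIndependent_of_le_finrank hH
  obtain ⟨a, b, hab, hdet⟩ := Matrix.exists_det_smul_add_smul_eq_zero
    (.of (Function.curry (f 0 : Fin 2 × Fin 2 → K)))
    (.of (Function.curry (f 1 : Fin 2 × Fin 2 → K)))
  obtain ⟨u, v, huv⟩ := Matrix.exists_eq_vecMulVec_of_det_eq_zero hdet
  have hw : (fun p : Fin 2 × Fin 2 => u p.1 * v p.2) = ↑(a • f 0 + b • f 1) := by
    ext ⟨i, j⟩
    exact congrFun₂ huv i j
  refine ⟨u, v, ?_, hw ▸ Submodule.coe_mem _⟩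
  rw [hw, ne_eq, ZeroMemClass.coe_eq_zero]
  intro h0
  have hcoeff := Fintype.linearIndependent_iff.mp hf ![a, b] (by simpa [Fin.sum_univ_two] using h0)
  exact hab.elim (· (hcoeff 0)) (· (hcoeff 1))

/-- In ℂ² ⊗ ℂ², every two-dimensional subspace contains a nonzero product vector;
hence any subspace containing no nonzero product vector has dimension at most 1. -/
theorem two_dim_subspace_contains_product :
    (∀ H : Submodule ℂ (Fin 2 × Fin 2 → ℂ), Module.finrank ℂ H = 2 →
      ∃ (u v : Fin 2 → ℂ),
        (fun p : Fin 2 × Fin 2 => u p.1 * v p.2) ≠ 0 ∧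
        (fun p : Fin 2 × Fin 2 => u p.1 * v p.2) ∈ H) ∧
    (∀ H : Submodule ℂ (Fin 2 × Fin 2 → ℂ),
      (∀ (u v : Fin 2 → ℂ), (fun p : Fin 2 × Fin 2 => u p.1 * v p.2) ∈ H →
        (fun p : Fin 2 × Fin 2 => u p.1 * v p.2) = 0) →
      Module.finrank ℂ H ≤ 1) := by
  refine ⟨fun H hH => H.exists_product_ne_zero_mem_of_two_le_finrank hH.ge, fun H hprod => ?_⟩
  by_contra! hH
  obtain ⟨u, v, hne, hmem⟩ := H.exists_product_ne_zero_mem_of_two_le_finrank hH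
  exact hne (hprod u v hmem)
end

section
/- If p is a unit vector in the range of a positive semidefinite matrix ρ, then there exists ε > 0 such that ρ − ε|p⟩⟨p| is positive semidefinite. -/
/-!
Write `ρ = Bᴴ B` and `p = ρ v = Bᴴ w` with `w = B v`. For every `x`, Cauchy–Schwarz gives
`|⟨p, x⟩|² = |⟨w, B x⟩|² ≤ ‖w‖² ‖B x‖² = ‖w‖² ⟨x, ρ x⟩`, i.e. `|p⟩⟨p| ≤ ‖w‖² ρ`,
so `ε = (1 + ‖w‖²)⁻¹` works.
-/

open scoped ComplexOrder MatrixOrder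
open Matrix

variable {𝕜 m n : Type*} [RCLike 𝕜]

section Fintype

variable [Fintype m] [Fintype n]

theorem Matrix.star_dotProduct_mul_dotProduct_le (w y : n → 𝕜) :
    star (star w ⬝ᵥ y) * (star w ⬝ᵥ y) ≤ (star w ⬝ᵥ w) * (star y ⬝ᵥ y) := by
  have inner_eq (u v : n → 𝕜) :
      star u ⬝ᵥ v = inner 𝕜 (WithLp.toLp 2 u) (WithLp.toLp 2 v) := by
    rw [EuclideanSpace.inner_toLp_toLp, dotProduct_comm]
  simp only [inner_eq, inner_self_eq_norm_sq_to_K, RCLike.star_def, RCLike.conj_mul]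
  exact_mod_cast
    (pow_le_pow_left₀ (norm_nonneg _) (norm_inner_le_norm _ _) 2).trans_eq (mul_pow ..)

theorem Matrix.posSemidef_smul_conjTranspose_mul_self_sub_vecMulVec (B : Matrix m n 𝕜)
    (w : m → 𝕜) :
    ((star w ⬝ᵥ w) • (Bᴴ * B) - vecMulVec (Bᴴ *ᵥ w) (star (Bᴴ *ᵥ w))).PosSemidef := by
  refine .of_dotProduct_mulVec_nonneg
    (((posSemidef_conjTranspose_mul_self B).smul (dotProduct_star_self_nonneg w)).1.sub
      (posSemidef_vecMulVec_self_star _).1) fun x ↦ ?_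
  have hpair : star (Bᴴ *ᵥ w) ⬝ᵥ x = star w ⬝ᵥ (B *ᵥ x) := by
    rw [star_mulVec, conjTranspose_conjTranspose, dotProduct_mulVec]
  rw [sub_mulVec, dotProduct_sub, smul_mulVec, dotProduct_smul, vecMulVec_mulVec, dotProduct_smul,
    ← mulVec_mulVec, dotProduct_mulVec, ← star_mulVec, star_dotProduct x, hpair, smul_eq_mul,
    op_smul_eq_mul, sub_nonneg]
  exact star_dotProduct_mul_dotProduct_le w (B *ᵥ x)

end Fintype

theorem Matrix.PosSemidef.sub_inv_one_add_smul_of_smul_sub {A P : Matrix n n 𝕜}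
    (hA : A.PosSemidef) {c : ℝ} (hc : 0 ≤ c) (h : ((c : 𝕜) • A - P).PosSemidef) :
    (A - (((1 + c)⁻¹ : ℝ) : 𝕜) • P).PosSemidef := by
  have hc_ne : (1 + c : 𝕜) ≠ 0 := by exact_mod_cast (by positivity : (1 + c) ≠ 0)
  have hsum : A - (((1 + c)⁻¹ : ℝ) : 𝕜) • P =
      (((1 + c)⁻¹ : ℝ) : 𝕜) • (((c : 𝕜) • A - P) + A) := by
    push_cast
    rw [smul_add, smul_sub, smul_smul, sub_add_eq_add_sub, ← add_smul, ← mul_add_one,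
      add_comm (c : 𝕜), inv_mul_cancel₀ hc_ne, one_smul]
  rw [hsum]
  exact (h.add hA).smul (RCLike.ofReal_nonneg.mpr (by positivity))

theorem sub_proj_posSemidef_of_mem_range_general {N : ℕ} (ρ : Matrix (Fin N) (Fin N) ℂ)
    (hpsd : ρ.PosSemidef) (p : Fin N → ℂ)
    (hmem : p ∈ LinearMap.range ρ.mulVecLin) :
    ∃ ε : ℝ, 0 < ε ∧ (ρ - (ε : ℂ) • Matrix.vecMulVec p (star p)).PosSemidef := by
  obtain ⟨v, rfl⟩ := hmem
  obtain ⟨B, rfl⟩ := CStarAlgebra.nonneg_iff_eq_star_mul_self.mp hpsd.nonneg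
  obtain ⟨c, hc, hc_eq⟩ :=
    RCLike.nonneg_iff_exists_ofReal.mp (dotProduct_star_self_nonneg (B *ᵥ v))
  have hle := posSemidef_smul_conjTranspose_mul_self_sub_vecMulVec B (B *ᵥ v)
  rw [← hc_eq, mulVec_mulVec] at hle
  exact ⟨(1 + c)⁻¹, by positivity, hpsd.sub_inv_one_add_smul_of_smul_sub hc hle⟩

/-- If p is a unit vector in the range of a positive semidefinite matrix ρ, then
there exists ε > 0 such that ρ − ε|p⟩⟨p| is positive semidefinite. -/
theorem sub_proj_posSemidef_of_mem_range {N : ℕ} (ρ : Matrix (Fin N) (Fin N) ℂ)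
    (hpsd : ρ.PosSemidef) (p : Fin N → ℂ) (hp : ∑ i, ‖p i‖ ^ 2 = 1)
    (hmem : p ∈ LinearMap.range ρ.mulVecLin) :
    ∃ ε : ℝ, 0 < ε ∧ (ρ - (ε : ℂ) • Matrix.vecMulVec p (star p)).PosSemidef :=
  sub_proj_posSemidef_of_mem_range_general ρ hpsd p hmem
end

section
/- Any Hermitian matrix A on ℂ^N with Tr A = 1 and Tr A² ≤ 1/(N−1) is positive semidefinite. -/
open scoped ComplexOrder

open Matrix Finset in
lemma trace_eq_sum_eig {N : ℕ} (A : Matrix (Fin N) (Fin N) ℂ) (hherm : A.IsHermitian) :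
    A.trace = ∑ i, (hherm.eigenvalues i : ℂ) := by
  conv_lhs => rw [hherm.spectral_theorem, Unitary.conjStarAlgAut_apply]
  rw [Matrix.trace_mul_cycle,
    (Matrix.mem_unitaryGroup_iff').mp (hherm.eigenvectorUnitary).2, Matrix.one_mul]
  simp [Matrix.trace_diagonal]

open Matrix Finset in
lemma trace_sq_eq_sum_eig {N : ℕ} (A : Matrix (Fin N) (Fin N) ℂ) (hherm : A.IsHermitian) :
    (A * A).trace = ∑ i, ((hherm.eigenvalues i : ℂ))^2 := by
  conv_lhs => rw [hherm.spectral_theorem, Unitary.conjStarAlgAut_apply]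
  rw [show ((hherm.eigenvectorUnitary : Matrix (Fin N) (Fin N) ℂ) *
      diagonal (RCLike.ofReal ∘ hherm.eigenvalues) * star (hherm.eigenvectorUnitary : Matrix (Fin N) (Fin N) ℂ)) *
      ((hherm.eigenvectorUnitary : Matrix (Fin N) (Fin N) ℂ) *
      diagonal (RCLike.ofReal ∘ hherm.eigenvalues) * star (hherm.eigenvectorUnitary : Matrix (Fin N) (Fin N) ℂ))
      = (hherm.eigenvectorUnitary : Matrix (Fin N) (Fin N) ℂ) *
      (diagonal (RCLike.ofReal ∘ hherm.eigenvalues) * diagonal (RCLike.ofReal ∘ hherm.eigenvalues)) *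
      star (hherm.eigenvectorUnitary : Matrix (Fin N) (Fin N) ℂ) by
    simp only [Matrix.mul_assoc]
    congr 2
    rw [← Matrix.mul_assoc (star (hherm.eigenvectorUnitary : Matrix (Fin N) (Fin N) ℂ)),
      (Matrix.mem_unitaryGroup_iff').mp (hherm.eigenvectorUnitary).2, Matrix.one_mul]]
  rw [Matrix.trace_mul_cycle,
    (Matrix.mem_unitaryGroup_iff').mp (hherm.eigenvectorUnitary).2, Matrix.one_mul,
    Matrix.diagonal_mul_diagonal]
  simp [Matrix.trace_diagonal, sq]

/-- Any Hermitian matrix A with Tr A = 1 and Tr A² ≤ 1/(N−1) is positive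
semidefinite: the Hilbert–Schmidt ball of suitable radius around the maximally
mixed state consists of density matrices. -/
theorem posSemidef_of_small_purity {N : ℕ} (hN : 1 < N)
    (A : Matrix (Fin N) (Fin N) ℂ) (hherm : A.IsHermitian) (htr : A.trace = 1)
    (hpur : ((A * A).trace).re ≤ 1 / ((N : ℝ) - 1)) :
    A.PosSemidef := by
  set lam := hherm.eigenvalues with hlam
  have hsum1 : ∑ i, lam i = 1 := by
    have := trace_eq_sum_eig A hherm
    rw [htr] at this
    have h2 := congrArg Complex.re this.symm
    simpa using h2
  have hsumsq : ∑ i, (lam i)^2 ≤ 1 / ((N : ℝ) - 1) := by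
    have := trace_sq_eq_sum_eig A hherm
    have h2 := congrArg Complex.re this
    rw [h2] at hpur
    convert hpur using 1
    simp [← Complex.ofReal_pow, lam]
  apply hherm.posSemidef_iff_eigenvalues_nonneg.mpr
  intro k
  by_contra hk
  push_neg at hk
  change lam k < 0 at hk
  have hcard : ((Finset.univ.erase k).card : ℝ) = (N : ℝ) - 1 := by
    rw [Finset.card_erase_of_mem (Finset.mem_univ k), Finset.card_univ, Fintype.card_fin,
      Nat.cast_sub hN.le, Nat.cast_one]
  set S := ∑ i ∈ Finset.univ.erase k, (lam i)^2 with hS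
  have hCS : (∑ i ∈ Finset.univ.erase k, lam i)^2 ≤ ((Finset.univ.erase k).card : ℝ) * S :=
    sq_sum_le_card_mul_sum_sq
  have hse : ∑ i ∈ Finset.univ.erase k, lam i = 1 - lam k := by
    have := Finset.sum_erase_add Finset.univ lam (Finset.mem_univ k)
    linarith [hsum1 ▸ this]
  have hsq : lam k ^ 2 + S ≤ 1 / ((N : ℝ) - 1) := by
    have := Finset.sum_erase_add Finset.univ (fun i => (lam i)^2) (Finset.mem_univ k)
    rw [← hS] at this
    linarith [hsumsq, this.symm ▸ hsumsq]
  rw [hcard, hse] at hCS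
  have hpos : (0:ℝ) < (N : ℝ) - 1 := by
    have : (1:ℝ) < (N:ℝ) := by exact_mod_cast hN
    linarith
  have hmul : ((N:ℝ) - 1) * (lam k ^ 2 + S) ≤ 1 := by
    rw [div_eq_inv_mul] at hsq
    calc ((N:ℝ) - 1) * (lam k ^ 2 + S) ≤ ((N:ℝ) - 1) * (((N:ℝ) - 1)⁻¹ * 1) :=
          by apply mul_le_mul_of_nonneg_left (by simpa using hsq) hpos.le
      _ = 1 := by field_simp
  nlinarith [sq_nonneg (lam k), mul_pos hpos (mul_pos (neg_pos.mpr hk) (neg_pos.mpr hk))]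
end
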